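/- Let A ≪ B in 𝕀ℝ and let F₁, F₂ : 𝕀_{[A,B]} → 𝕀ℝ be continuous with respect to the Moore metric d_M. If F₁([x, ā + ((b̄−ā)/(b̲−a̲))(x−a̲)]) = F₂([x, ā + ((b̄−ā)/(b̲−a̲))(x−a̲)]) for every x ∈ [a̲, b̲] (i.e., F₁ and F₂ agree at every point of the segment from A to B), then ∫_A^B F₁(X)dX = ∫_A^B F₂(X)dX. -/

import Mathlib

/-!
Only the values of `F` on the segment `t ↦ A + t(B - A)` matter. Work with one real component
`g` of `F` at a time (a lower sum of `g` is minus an upper sum of `-g`). By uniform continuity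
on the compact `𝕀_{[A,B]}`, on a cell `𝕀_{[P_k, P_{k+1}]}` of small Moore diameter `g` stays
within `ε` of its value at the corner `P_k`, which lies on the segment. Cutting every cell of a
partition `Q` into `m` equal parts, each fine corner lies in a coarse cell of `Q`, so the upper
sum of `g₁` over the refinement is at most the upper sum of `g₂` over `Q` plus `ε`; by symmetry
the two infima over partitions coincide.
-/

/-- `𝕀ℝ`: the set of nonempty closed bounded real intervals, identified with
pairs `(lo, hi) ∈ ℝ × ℝ` with `lo ≤ hi`.  The subtype order inherited from the
product order on `ℝ × ℝ` is exactly the Kulisch–Miranker order, and the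
inherited metric (sup metric of `ℝ × ℝ`) is exactly the Moore metric `d_M`. -/
abbrev IR : Type := {p : ℝ × ℝ // p.1 ≤ p.2}

namespace IR

/-- Left endpoint projection `π₁`. -/
def lo (A : IR) : ℝ := A.val.1

/-- Right endpoint projection `π₂`. -/
def hi (A : IR) : ℝ := A.val.2

/-- The strict Kulisch–Miranker order `A ≪ B`. -/
def sll (A B : IR) : Prop := lo A < lo B ∧ hi A < hi B

/-- The Moore metric `d_M`. -/
noncomputable def dM (A B : IR) : ℝ := max |lo B - lo A| |hi B - hi A|

/-- `𝕀_{[A,B]} = {X ∈ 𝕀ℝ : A ≤ X ≤ B}`. -/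
def box (A B : IR) : Set IR := {X : IR | A ≤ X ∧ X ≤ B}

/-- The interval `[u,v]` (with a junk degenerate value if `u > v`). -/
noncomputable def mkI (u v : ℝ) : IR := if h : u ≤ v then ⟨(u, v), h⟩ else ⟨(u, u), le_rfl⟩

/-- The point `A + t(B - A)` on the segment from `A` to `B`. -/
noncomputable def seg (A B : IR) (t : ℝ) : IR :=
  mkI (lo A + t * (lo B - lo A)) (hi A + t * (hi B - hi A))

/-- Componentwise infimum of a set of intervals, as a pair of reals. -/
noncomputable def infS (S : Set IR) : ℝ × ℝ := (sInf (lo '' S), sInf (hi '' S))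

/-- Componentwise supremum of a set of intervals, as a pair of reals. -/
noncomputable def supS (S : Set IR) : ℝ × ℝ := (sSup (lo '' S), sSup (hi '' S))

/-- A partition `A = P₀ ≪ P₁ ≪ ⋯ ≪ P_N = B` of `𝕀_{[A,B]}`, described by its
parameters `0 = t₀ < t₁ < ⋯ < t_N = 1` (so that `P_k = A + t_k (B - A)`). -/
structure Partition where
  n : ℕ
  npos : 0 < n
  t : ℕ → ℝ
  t0 : t 0 = 0
  tn : t n = 1
  mono : ∀ i < n, t i < t (i + 1)

/-- The set of parameters of a partition. -/
def Partition.pts (P : Partition) : Set ℝ := P.t '' Set.Iic P.n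

/-- The set of points `P_k = A + t_k(B-A)` of a partition of `𝕀_{[A,B]}`. -/
noncomputable def Partition.ipts (A B : IR) (P : Partition) : Set IR :=
  (fun i => seg A B (P.t i)) '' Set.Iic P.n

/-- Lower Riemann sum `σ(F, 𝒫)` (as a pair of reals; interval sums are
componentwise and `λ • [u,v] = [λu, λv]` for the scalars `λ = d_M ≥ 0`). -/
noncomputable def lowerSum (A B : IR) (F : IR → IR) (P : Partition) : ℝ × ℝ :=
  ∑ k ∈ Finset.range P.n,
    dM (seg A B (P.t k)) (seg A B (P.t (k + 1))) •
      infS (F '' box (seg A B (P.t k)) (seg A B (P.t (k + 1))))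

/-- Upper Riemann sum `Σ(F, 𝒫)`. -/
noncomputable def upperSum (A B : IR) (F : IR → IR) (P : Partition) : ℝ × ℝ :=
  ∑ k ∈ Finset.range P.n,
    dM (seg A B (P.t k)) (seg A B (P.t (k + 1))) •
      supS (F '' box (seg A B (P.t k)) (seg A B (P.t (k + 1))))

/-- The lower integral `∫̲_A^B F(X)dX`: componentwise supremum of the lower
Riemann sums over all partitions. -/
noncomputable def lowerInt (A B : IR) (F : IR → IR) : ℝ × ℝ :=
  (sSup (Set.range fun P : Partition => (lowerSum A B F P).1),
   sSup (Set.range fun P : Partition => (lowerSum A B F P).2))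

/-- The upper integral `∫̄_A^B F(X)dX`: componentwise infimum of the upper
Riemann sums over all partitions. -/
noncomputable def upperInt (A B : IR) (F : IR → IR) : ℝ × ℝ :=
  (sInf (Set.range fun P : Partition => (upperSum A B F P).1),
   sInf (Set.range fun P : Partition => (upperSum A B F P).2))

/-- `F` is bounded on `𝕀_{[A,B]}` (order bounded, equivalently metrically
bounded). -/
def BoundedOn (F : IR → IR) (A B : IR) : Prop :=
  ∃ C D : IR, ∀ X ∈ box A B, C ≤ F X ∧ F X ≤ D

end IR

lemma ciInf_le_ciInf_of_forall_exists_le_add {ι ι' : Sort*} [Nonempty ι'] {f : ι → ℝ}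
    {g : ι' → ℝ} (hf : BddBelow (Set.range f)) (h : ∀ j, ∀ ε > 0, ∃ i, f i ≤ g j + ε) :
    ⨅ i, f i ≤ ⨅ j, g j :=
  le_ciInf fun j => le_of_forall_pos_le_add fun ε hε =>
    let ⟨i, hi⟩ := h j ε hε
    (ciInf_le hf i).trans hi

namespace IR

lemma le_iff_lo_le_and_hi_le {X Y : IR} : X ≤ Y ↔ lo X ≤ lo Y ∧ hi X ≤ hi Y := Iff.rfl

lemma sll.le {A B : IR} (h : sll A B) : A ≤ B := ⟨h.1.le, h.2.le⟩

lemma lo_le_hi (A : IR) : lo A ≤ hi A := A.2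

lemma dist_eq_dM (X Y : IR) : dist X Y = dM Y X := by
  rw [Subtype.dist_eq, Prod.dist_eq, Real.dist_eq, Real.dist_eq]
  rfl

lemma dist_le_dM_of_mem_box {P P' X : IR} (hX : X ∈ box P P') : dist X P ≤ dM P P' := by
  obtain ⟨hlo, hhi⟩ := le_iff_lo_le_and_hi_le.1 hX.1
  obtain ⟨hlo', hhi'⟩ := le_iff_lo_le_and_hi_le.1 hX.2
  rw [dist_eq_dM, dM, dM, abs_of_nonneg (sub_nonneg.2 hlo), abs_of_nonneg (sub_nonneg.2 hhi),
    abs_of_nonneg (by linarith : (0 : ℝ) ≤ lo P' - lo P),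
    abs_of_nonneg (by linarith : (0 : ℝ) ≤ hi P' - hi P)]
  exact max_le_max (by linarith) (by linarith)

lemma isCompact_box (A B : IR) : IsCompact (box A B) :=
  (isClosed_le continuous_fst continuous_snd).isClosedEmbedding_subtypeVal.isCompact_preimage
    (isCompact_Icc (a := A.val) (b := B.val))

lemma continuous_lo : Continuous lo := continuous_fst.comp continuous_subtype_val

lemma continuous_hi : Continuous hi := continuous_snd.comp continuous_subtype_val

section Segment

variable {A B : IR} {s s' t : ℝ}

lemma seg_lo_le_hi (ht : t ∈ Set.Icc (0 : ℝ) 1) :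
    lo A + t * (lo B - lo A) ≤ hi A + t * (hi B - hi A) := by
  nlinarith [ht.1, ht.2, lo_le_hi A, lo_le_hi B]

lemma lo_seg (ht : t ∈ Set.Icc (0 : ℝ) 1) : lo (seg A B t) = lo A + t * (lo B - lo A) := by
  rw [seg, mkI, dif_pos (seg_lo_le_hi ht)]; rfl

lemma hi_seg (ht : t ∈ Set.Icc (0 : ℝ) 1) : hi (seg A B t) = hi A + t * (hi B - hi A) := by
  rw [seg, mkI, dif_pos (seg_lo_le_hi ht)]; rfl

lemma seg_zero : seg A B 0 = A := by
  simp [seg, mkI, lo, hi, A.2]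

lemma seg_one : seg A B 1 = B := by
  simp [seg, mkI, lo, hi, B.2]

lemma seg_eq_mkI (h : lo A ≠ lo B) (t : ℝ) :
    seg A B t = mkI (lo A + t * (lo B - lo A))
      (hi A + (hi B - hi A) / (lo B - lo A) * (lo A + t * (lo B - lo A) - lo A)) := by
  rw [seg]
  congr 2
  field_simp [sub_ne_zero.2 h.symm]
  ring

lemma seg_mono (hAB : A ≤ B) (hs : s ∈ Set.Icc (0 : ℝ) 1) (hs' : s' ∈ Set.Icc (0 : ℝ) 1)
    (hss' : s ≤ s') : seg A B s ≤ seg A B s' := by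
  obtain ⟨hlo, hhi⟩ := le_iff_lo_le_and_hi_le.1 hAB
  rw [le_iff_lo_le_and_hi_le, lo_seg hs, lo_seg hs', hi_seg hs, hi_seg hs']
  constructor <;> nlinarith [mul_nonneg (sub_nonneg.2 hss') (sub_nonneg.2 hlo),
    mul_nonneg (sub_nonneg.2 hss') (sub_nonneg.2 hhi)]

lemma seg_mem_box_seg (hAB : A ≤ B) {u u' : ℝ} (hu : 0 ≤ u) (hu' : u' ≤ 1)
    (ht : t ∈ Set.Icc u u') : seg A B t ∈ box (seg A B u) (seg A B u') := by
  have ht01 : t ∈ Set.Icc (0 : ℝ) 1 := ⟨hu.trans ht.1, ht.2.trans hu'⟩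
  exact ⟨seg_mono hAB ⟨hu, ht.1.trans ht01.2⟩ ht01 ht.1,
    seg_mono hAB ht01 ⟨ht01.1.trans ht.2, hu'⟩ ht.2⟩

lemma box_seg_subset_box (hAB : A ≤ B) (hs : 0 ≤ s) (hss' : s ≤ s') (hs' : s' ≤ 1) :
    box (seg A B s) (seg A B s') ⊆ box A B := by
  rintro X ⟨hsX, hXs'⟩
  have hsA := seg_mem_box_seg (A := A) (B := B) hAB le_rfl le_rfl ⟨hs, hss'.trans hs'⟩
  have hs'B := seg_mem_box_seg (A := A) (B := B) hAB le_rfl le_rfl ⟨hs.trans hss', hs'⟩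
  rw [seg_zero, seg_one] at hsA hs'B
  exact ⟨hsA.1.trans hsX, hXs'.trans hs'B.2⟩

lemma dM_seg (hs : s ∈ Set.Icc (0 : ℝ) 1) (hs' : s' ∈ Set.Icc (0 : ℝ) 1) :
    dM (seg A B s) (seg A B s') = |s' - s| * dM A B := by
  rw [dM, dM, lo_seg hs, lo_seg hs', hi_seg hs, hi_seg hs', mul_max_of_nonneg _ _ (abs_nonneg _),
    ← abs_mul, ← abs_mul]
  congr 2 <;> ring

end Segment

namespace Partition

instance : Nonempty Partition :=
  ⟨{ n := 1, npos := one_pos, t := Nat.cast, t0 := Nat.cast_zero, tn := Nat.cast_one,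
     mono := fun i _ => by exact_mod_cast i.lt_succ_self }⟩

variable (P : Partition)

lemma t_mono {i j : ℕ} (hij : i ≤ j) (hj : j ≤ P.n) : P.t i ≤ P.t j := by
  induction j, hij using Nat.le_induction with
  | base => exact le_rfl
  | succ k _ ih => exact (ih (by omega)).trans (P.mono k (by omega)).le

lemma t_mem_Icc {k : ℕ} (hk : k ≤ P.n) : P.t k ∈ Set.Icc (0 : ℝ) 1 :=
  ⟨P.t0 ▸ P.t_mono k.zero_le hk, P.tn ▸ P.t_mono hk le_rfl⟩

lemma sum_sub_t : ∑ k ∈ Finset.range P.n, (P.t (k + 1) - P.t k) = 1 := by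
  rw [Finset.sum_range_sub, P.tn, P.t0, sub_zero]

noncomputable def refineT (m i : ℕ) : ℝ :=
  P.t (i / m) + ((i % m : ℕ) : ℝ) / m * (P.t (i / m + 1) - P.t (i / m))

lemma refineT_mul_add {m : ℕ} (hm : 0 < m) {j r : ℕ} (hr : r ≤ m) :
    P.refineT m (j * m + r) = P.t j + r / m * (P.t (j + 1) - P.t j) := by
  rcases hr.lt_or_eq with hr | rfl
  · rw [refineT, Nat.mul_comm, Nat.mul_add_div hm, Nat.div_eq_of_lt hr, Nat.mul_add_mod,
      Nat.mod_eq_of_lt hr, Nat.add_zero]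
  · rw [refineT, ← Nat.succ_mul, Nat.mul_div_cancel _ hm, Nat.mul_mod_left,
      div_self (Nat.cast_pos.2 hm).ne']
    simp

lemma refineT_succ_sub {m : ℕ} (hm : 0 < m) {j r : ℕ} (hr : r < m) :
    P.refineT m (j * m + r + 1) - P.refineT m (j * m + r) = (P.t (j + 1) - P.t j) / m := by
  rw [P.refineT_mul_add hm hr.le, add_assoc, P.refineT_mul_add hm hr, Nat.cast_succ]
  field_simp
  ring

lemma refineT_mem_Icc {m : ℕ} (hm : 0 < m) {j r : ℕ} (hj : j < P.n) (hr : r ≤ m) :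
    P.refineT m (j * m + r) ∈ Set.Icc (P.t j) (P.t (j + 1)) := by
  have hΔ : 0 ≤ P.t (j + 1) - P.t j := sub_nonneg.2 (P.mono j hj).le
  have hrm : (r : ℝ) / m ≤ 1 := div_le_one_of_le₀ (by exact_mod_cast hr) (Nat.cast_nonneg m)
  rw [P.refineT_mul_add hm hr]
  constructor <;> nlinarith [mul_nonneg (div_nonneg r.cast_nonneg m.cast_nonneg) hΔ]

/-- `P` with each cell cut into `m` equal parts. -/
noncomputable def refine (m : ℕ) (hm : 0 < m) : Partition where
  n := P.n * m
  npos := Nat.mul_pos P.npos hm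
  t := P.refineT m
  t0 := by simp [refineT, P.t0]
  tn := by simpa [Nat.mul_comm, P.tn] using P.refineT_mul_add hm (j := P.n) m.zero_le
  mono := by
    intro i hi
    have hj : i / m < P.n := (Nat.div_lt_iff_lt_mul hm).2 hi
    have hsub := P.refineT_succ_sub hm (j := i / m) (Nat.mod_lt i hm)
    rw [Nat.div_add_mod'] at hsub
    have := div_pos (sub_pos.2 (P.mono _ hj)) (Nat.cast_pos.2 hm)
    linarith

lemma sum_range_refine {m : ℕ} (hm : 0 < m) (f : ℕ → ℝ) :
    ∑ k ∈ Finset.range (P.refine m hm).n, f k =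
      ∑ j ∈ Finset.range P.n, ∑ r ∈ Finset.range m, f (j * m + r) := by
  change ∑ k ∈ Finset.range (P.n * m), f k = _
  induction P.n with
  | zero => simp
  | succ n ih => rw [Finset.sum_range_succ, ← ih, Nat.succ_mul, Finset.sum_range_add]

end Partition

noncomputable def scalarUpperSum (A B : IR) (g : IR → ℝ) (P : Partition) : ℝ :=
  ∑ k ∈ Finset.range P.n, dM (seg A B (P.t k)) (seg A B (P.t (k + 1))) *
    sSup (g '' box (seg A B (P.t k)) (seg A B (P.t (k + 1))))

section Sums

variable (A B : IR) (F : IR → IR) (P : Partition)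

lemma upperSum_eq :
    upperSum A B F P = (scalarUpperSum A B (lo ∘ F) P, scalarUpperSum A B (hi ∘ F) P) := by
  simp only [upperSum, scalarUpperSum, supS, Set.image_image, Prod.ext_iff, Prod.fst_sum,
    Prod.snd_sum, Prod.smul_fst, Prod.smul_snd, smul_eq_mul, Function.comp_def, and_self]

lemma lowerSum_eq : lowerSum A B F P =
    (-scalarUpperSum A B ((-lo) ∘ F) P, -scalarUpperSum A B ((-hi) ∘ F) P) := by
  simp only [lowerSum, scalarUpperSum, infS, Set.image_image, Prod.ext_iff, Prod.fst_sum,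
    Prod.snd_sum, Prod.smul_fst, Prod.smul_snd, smul_eq_mul, Real.sInf_def,
    ← Set.image_neg_eq_neg, mul_neg, Finset.sum_neg_distrib]
  exact ⟨rfl, rfl⟩

lemma upperInt_eq : upperInt A B F =
    (⨅ P, scalarUpperSum A B (lo ∘ F) P, ⨅ P, scalarUpperSum A B (hi ∘ F) P) := by
  simp only [upperInt, upperSum_eq]
  rfl

lemma lowerInt_eq : lowerInt A B F =
    (-⨅ P, scalarUpperSum A B ((-lo) ∘ F) P, -⨅ P, scalarUpperSum A B ((-hi) ∘ F) P) := by
  simp only [lowerInt, lowerSum_eq, ← Set.neg_range, Real.sSup_neg]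
  rfl

end Sums

section Estimates

variable {A B : IR} {g g₁ g₂ : IR → ℝ}

lemma dM_nonneg (A B : IR) : 0 ≤ dM A B := le_max_of_le_left (abs_nonneg _)

lemma dM_pos (h : sll A B) : 0 < dM A B :=
  lt_max_of_lt_left (abs_pos.2 (sub_ne_zero.2 h.1.ne'))

lemma dM_seg_t (P : Partition) {k : ℕ} (hk : k < P.n) :
    dM (seg A B (P.t k)) (seg A B (P.t (k + 1))) = (P.t (k + 1) - P.t k) * dM A B := by
  rw [dM_seg (P.t_mem_Icc hk.le) (P.t_mem_Icc hk), abs_of_pos (sub_pos.2 (P.mono k hk))]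

lemma seg_t_mem_box (hAB : A ≤ B) (P : Partition) {k : ℕ} (hk : k < P.n) :
    seg A B (P.t k) ∈ box (seg A B (P.t k)) (seg A B (P.t (k + 1))) :=
  seg_mem_box_seg hAB (P.t_mem_Icc hk.le).1 (P.t_mem_Icc hk).2 ⟨le_rfl, P.t_mono k.le_succ hk⟩

lemma box_seg_t_subset_box (hAB : A ≤ B) (P : Partition) {k : ℕ} (hk : k < P.n) :
    box (seg A B (P.t k)) (seg A B (P.t (k + 1))) ⊆ box A B :=
  box_seg_subset_box hAB (P.t_mem_Icc hk.le).1 (P.t_mono k.le_succ hk) (P.t_mem_Icc hk).2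

lemma neg_mul_le_scalarUpperSum (hAB : A ≤ B) {C : ℝ} (hC : ∀ X ∈ box A B, |g X| ≤ C)
    (P : Partition) : -(C * dM A B) ≤ scalarUpperSum A B g P := by
  have hterm : ∀ k ∈ Finset.range P.n, (P.t (k + 1) - P.t k) * dM A B * -C ≤
      dM (seg A B (P.t k)) (seg A B (P.t (k + 1))) *
        sSup (g '' box (seg A B (P.t k)) (seg A B (P.t (k + 1)))) := by
    intro k hk
    have hk := Finset.mem_range.1 hk
    have hsub := box_seg_t_subset_box hAB P hk
    have hmem := seg_t_mem_box hAB P hk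
    have hbdd : BddAbove (g '' box (seg A B (P.t k)) (seg A B (P.t (k + 1)))) :=
      ⟨C, Set.forall_mem_image.2 fun X hX => (abs_le.1 (hC X (hsub hX))).2⟩
    rw [dM_seg_t P hk]
    refine mul_le_mul_of_nonneg_left ?_ (mul_nonneg (sub_nonneg.2 (P.mono k hk).le) (dM_nonneg A B))
    exact (abs_le.1 (hC _ (hsub hmem))).1.trans (le_csSup hbdd ⟨_, hmem, rfl⟩)
  calc -(C * dM A B) = ∑ k ∈ Finset.range P.n, (P.t (k + 1) - P.t k) * dM A B * -C := by
        rw [← Finset.sum_mul, ← Finset.sum_mul, P.sum_sub_t]; ring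
    _ ≤ scalarUpperSum A B g P := Finset.sum_le_sum hterm

lemma sSup_image_box_seg_le (hAB : A ≤ B) {δ η : ℝ}
    (hmod : ∀ X ∈ box A B, ∀ Y ∈ box A B, dist X Y < δ → dist (g X) (g Y) < η)
    {s s' : ℝ} (hs : 0 ≤ s) (hss' : s ≤ s') (hs' : s' ≤ 1) (hδ : (s' - s) * dM A B < δ) :
    sSup (g '' box (seg A B s) (seg A B s')) ≤ g (seg A B s) + η := by
  have hmem := seg_mem_box_seg (A := A) (B := B) hAB hs hs' ⟨le_rfl, hss'⟩
  have hsub := box_seg_subset_box hAB hs hss' hs'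
  refine csSup_le ⟨_, Set.mem_image_of_mem g hmem⟩ (Set.forall_mem_image.2 fun X hX => ?_)
  have hdist : dist X (seg A B s) < δ := by
    refine (dist_le_dM_of_mem_box hX).trans_lt ?_
    rwa [dM_seg ⟨hs, hs'.trans' hss'⟩ ⟨hs.trans hss', hs'⟩, abs_of_nonneg (sub_nonneg.2 hss')]
  have := hmod X (hsub hX) _ (hsub hmem) hdist
  rw [Real.dist_eq, abs_lt] at this
  linarith [this.2]

lemma dM_mul_sSup_le (hAB : A ≤ B) {δ η : ℝ}
    (hmod : ∀ X ∈ box A B, ∀ Y ∈ box A B, dist X Y < δ → dist (g₁ X) (g₁ Y) < η)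
    (hb₂ : BddAbove (g₂ '' box A B))
    (hag : ∀ t ∈ Set.Icc (0 : ℝ) 1, g₁ (seg A B t) = g₂ (seg A B t))
    {u s s' u' : ℝ} (hu : 0 ≤ u) (hus : u ≤ s) (hss' : s ≤ s') (hs'u' : s' ≤ u') (hu' : u' ≤ 1)
    (hδ : (s' - s) * dM A B < δ) :
    dM (seg A B s) (seg A B s') * sSup (g₁ '' box (seg A B s) (seg A B s')) ≤
      (s' - s) * (dM A B * sSup (g₂ '' box (seg A B u) (seg A B u')) + η * dM A B) := by
  have hs : s ∈ Set.Icc (0 : ℝ) 1 := ⟨hu.trans hus, by linarith⟩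
  have hsub := box_seg_subset_box hAB hu (by linarith) hu'
  have hsup₁ := sSup_image_box_seg_le hAB hmod hs.1 hss' (hs'u'.trans hu') hδ
  have hsup₂ : g₂ (seg A B s) ≤ sSup (g₂ '' box (seg A B u) (seg A B u')) :=
    le_csSup (hb₂.mono (Set.image_mono hsub))
      ⟨_, seg_mem_box_seg hAB hu hu' ⟨hus, hss'.trans hs'u'⟩, rfl⟩
  rw [hag s hs] at hsup₁
  rw [dM_seg hs ⟨hs.1.trans hss', hs'u'.trans hu'⟩, abs_of_nonneg (sub_nonneg.2 hss')]
  have hL := dM_nonneg A B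
  calc (s' - s) * dM A B * sSup (g₁ '' box (seg A B s) (seg A B s'))
      ≤ (s' - s) * dM A B * (sSup (g₂ '' box (seg A B u) (seg A B u')) + η) :=
        mul_le_mul_of_nonneg_left (by linarith) (mul_nonneg (sub_nonneg.2 hss') hL)
    _ = _ := by ring

lemma dM_mul_sSup_refine_le (hAB : A ≤ B) {δ η : ℝ}
    (hmod : ∀ X ∈ box A B, ∀ Y ∈ box A B, dist X Y < δ → dist (g₁ X) (g₁ Y) < η)
    (hb₂ : BddAbove (g₂ '' box A B))
    (hag : ∀ t ∈ Set.Icc (0 : ℝ) 1, g₁ (seg A B t) = g₂ (seg A B t))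
    (Q : Partition) {m : ℕ} (hm : 0 < m) (hδ : dM A B / m < δ) {j r : ℕ} (hj : j < Q.n)
    (hr : r < m) :
    dM (seg A B (Q.refineT m (j * m + r))) (seg A B (Q.refineT m (j * m + r + 1))) *
        sSup (g₁ '' box (seg A B (Q.refineT m (j * m + r)))
          (seg A B (Q.refineT m (j * m + r + 1)))) ≤
      (Q.t (j + 1) - Q.t j) / m *
        (dM A B * sSup (g₂ '' box (seg A B (Q.t j)) (seg A B (Q.t (j + 1)))) + η * dM A B) := by
  have hs := Q.refineT_mem_Icc hm hj hr.le
  have hs' : Q.refineT m (j * m + r + 1) ∈ Set.Icc (Q.t j) (Q.t (j + 1)) :=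
    Q.refineT_mem_Icc hm hj (r := r + 1) hr
  have hlen := Q.refineT_succ_sub hm (j := j) hr
  have hΔ : Q.t (j + 1) - Q.t j ≤ 1 := by linarith [(Q.t_mem_Icc hj.le).1, (Q.t_mem_Icc hj).2]
  have hshort : (Q.t (j + 1) - Q.t j) / m * dM A B < δ :=
    calc (Q.t (j + 1) - Q.t j) / m * dM A B ≤ dM A B / m := by
          rw [div_mul_eq_mul_div]; gcongr; nlinarith [dM_nonneg A B]
      _ < δ := hδ
  rw [← hlen]
  exact dM_mul_sSup_le hAB hmod hb₂ hag (Q.t_mem_Icc hj.le).1 hs.1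
    (by rw [← sub_nonneg, hlen]; exact div_nonneg (sub_nonneg.2 (Q.mono j hj).le) m.cast_nonneg)
    hs'.2 (Q.t_mem_Icc hj).2 (hlen ▸ hshort)

lemma exists_scalarUpperSum_le_add (h : sll A B) (hc₁ : ContinuousOn g₁ (box A B))
    (hb₂ : BddAbove (g₂ '' box A B))
    (hag : ∀ t ∈ Set.Icc (0 : ℝ) 1, g₁ (seg A B t) = g₂ (seg A B t))
    (Q : Partition) {ε : ℝ} (hε : 0 < ε) :
    ∃ P, scalarUpperSum A B g₁ P ≤ scalarUpperSum A B g₂ Q + ε := by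
  set L := dM A B
  have hL : 0 < L := dM_pos h
  obtain ⟨δ, hδ, hmod⟩ := Metric.uniformContinuousOn_iff.1
    ((isCompact_box A B).uniformContinuousOn_of_continuous hc₁) (ε / L) (div_pos hε hL)
  obtain ⟨m, hm⟩ := exists_nat_gt (L / δ)
  have hm₀ : 0 < m := by exact_mod_cast (div_pos hL hδ).trans hm
  have hLm : L / m < δ := by
    rw [div_lt_iff₀ (Nat.cast_pos.2 hm₀)]; rwa [div_lt_iff₀ hδ, mul_comm] at hm
  refine ⟨Q.refine m hm₀, ?_⟩
  calc scalarUpperSum A B g₁ (Q.refine m hm₀)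
      ≤ ∑ j ∈ Finset.range Q.n, ∑ _r ∈ Finset.range m, (Q.t (j + 1) - Q.t j) / m *
          (L * sSup (g₂ '' box (seg A B (Q.t j)) (seg A B (Q.t (j + 1)))) + ε / L * L) := by
        rw [scalarUpperSum, Q.sum_range_refine hm₀]
        exact Finset.sum_le_sum fun j hj => Finset.sum_le_sum fun r hr =>
          dM_mul_sSup_refine_le h.le hmod hb₂ hag Q hm₀ hLm (Finset.mem_range.1 hj)
            (Finset.mem_range.1 hr)
    _ = ∑ j ∈ Finset.range Q.n, (dM (seg A B (Q.t j)) (seg A B (Q.t (j + 1))) *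
          sSup (g₂ '' box (seg A B (Q.t j)) (seg A B (Q.t (j + 1)))) +
          (Q.t (j + 1) - Q.t j) * ε) := by
        refine Finset.sum_congr rfl fun j hj => ?_
        rw [Finset.sum_const, Finset.card_range, nsmul_eq_mul, dM_seg_t Q (Finset.mem_range.1 hj),
          div_mul_cancel₀ _ hL.ne']
        field_simp
        ring
    _ = scalarUpperSum A B g₂ Q + ε := by
        rw [Finset.sum_add_distrib, ← Finset.sum_mul, Q.sum_sub_t, one_mul, scalarUpperSum]

lemma bddBelow_range_scalarUpperSum (hAB : A ≤ B) (hc : ContinuousOn g (box A B)) :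
    BddBelow (Set.range (scalarUpperSum A B g)) := by
  obtain ⟨C, hC⟩ := (isCompact_box A B).exists_bound_of_continuousOn hc
  exact ⟨_, Set.forall_mem_range.2 (neg_mul_le_scalarUpperSum hAB hC)⟩

lemma iInf_scalarUpperSum_eq (h : sll A B) (hc₁ : ContinuousOn g₁ (box A B))
    (hc₂ : ContinuousOn g₂ (box A B))
    (hag : ∀ t ∈ Set.Icc (0 : ℝ) 1, g₁ (seg A B t) = g₂ (seg A B t)) :
    ⨅ P, scalarUpperSum A B g₁ P = ⨅ P, scalarUpperSum A B g₂ P :=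
  le_antisymm
    (ciInf_le_ciInf_of_forall_exists_le_add (bddBelow_range_scalarUpperSum h.le hc₁)
      fun _ _ hε => exists_scalarUpperSum_le_add h hc₁ ((isCompact_box A B).bddAbove_image hc₂)
        hag _ hε)
    (ciInf_le_ciInf_of_forall_exists_le_add (bddBelow_range_scalarUpperSum h.le hc₂)
      fun _ _ hε => exists_scalarUpperSum_le_add h hc₂ ((isCompact_box A B).bddAbove_image hc₁)
        (fun t ht => (hag t ht).symm) _ hε)

end Estimates

end IR

open IR in
/-- Let `A ≪ B` and let `F₁, F₂ : 𝕀_{[A,B]} → 𝕀ℝ` be continuous w.r.t. the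
Moore metric.  If `F₁` and `F₂` agree at every point
`[x, ā + ((b̄−ā)/(b̲−a̲))(x−a̲)]`, `x ∈ [a̲,b̲]`, of the segment from `A` to `B`,
then `∫_A^B F₁(X)dX = ∫_A^B F₂(X)dX` (for continuous functions the lower and
upper integrals coincide, so we state equality of both). -/
theorem IR.integral_depends_only_on_segment (A B : IR) (h : sll A B)
    (F₁ F₂ : IR → IR) (h₁ : ContinuousOn F₁ (box A B))
    (h₂ : ContinuousOn F₂ (box A B))
    (hagree : ∀ x ∈ Set.Icc (lo A) (lo B),
      F₁ (mkI x (hi A + ((hi B - hi A) / (lo B - lo A)) * (x - lo A))) =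
      F₂ (mkI x (hi A + ((hi B - hi A) / (lo B - lo A)) * (x - lo A)))) :
    lowerInt A B F₁ = lowerInt A B F₂ ∧ upperInt A B F₁ = upperInt A B F₂ := by
  have hseg : ∀ t ∈ Set.Icc (0 : ℝ) 1, F₁ (seg A B t) = F₂ (seg A B t) := fun t ht => by
    rw [seg_eq_mkI h.1.ne]
    refine hagree _ ⟨?_, ?_⟩ <;> nlinarith [ht.1, ht.2, h.1]
  have hcomp : ∀ φ : IR → ℝ, Continuous φ →
      ⨅ P, scalarUpperSum A B (φ ∘ F₁) P = ⨅ P, scalarUpperSum A B (φ ∘ F₂) P :=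
    fun φ hφ => iInf_scalarUpperSum_eq h (hφ.comp_continuousOn h₁) (hφ.comp_continuousOn h₂)
      fun t ht => congrArg φ (hseg t ht)
  rw [lowerInt_eq, lowerInt_eq, upperInt_eq, upperInt_eq, hcomp _ continuous_lo,
    hcomp _ continuous_hi, hcomp _ continuous_lo.neg, hcomp _ continuous_hi.neg]
  exact ⟨rfl, rfl⟩
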